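/- Let f : ℕ → ℕ be a function whose graph {(x_2, x_1) : x_1 = f(x_2)} has a Diophantine representation over ℕ, i.e., there is a polynomial W with integer coefficients such that for all x_1, x_2 ∈ ℕ: x_1 = f(x_2) ⟺ ∃ x_3,...,x_r ∈ ℕ, W(x_1,...,x_r) = 0. Then there exists s ≥ 3 and a conjunction Ψ of equations of the forms x_i = 1, x_i + x_j = x_k, x_i · x_j = x_k (i, j, k ∈ {1,...,s}) such that for all integers x_1, x_2: (x_2 ≥ 0 ∧ x_1 = f(x_2)) ⟺ ∃ x_3,...,x_s ∈ ℤ, Ψ(x_1,...,x_s). -/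

import Mathlib

/-- An equation from the set `E_n`: `x_i = 1`, `x_i + x_j = x_k`, or `x_i * x_j = x_k`
with indices in `{1, ..., n}` (here `Fin n`). -/
inductive Eqn (n : ℕ) where
  | one (i : Fin n)
  | add (i j k : Fin n)
  | mul (i j k : Fin n)

/-- The equation holds for an assignment `x` of values in a commutative semiring. -/
def Eqn.Holds {n : ℕ} {K : Type*} [CommSemiring K] (x : Fin n → K) : Eqn n → Prop
  | .one i => x i = 1
  | .add i j k => x i + x j = x k
  | .mul i j k => x i * x j = x k

/-! Relations of the form "∃ z, system of equations `x = 1`, `x + y = z`, `x * y = z` holds" are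
closed under conjunction, finite conjunction and existential quantification, and contain
`x = a` for every integer `a`; by induction on the polynomial they therefore contain the graph of
every integer polynomial, hence its zero set. An integer is non-negative iff it is a sum of four
squares, so the representation of the graph of `f` over `ℕ` becomes one over `ℤ`. -/

open MvPolynomial

def Eqn.map {n m : ℕ} (σ : Fin n → Fin m) : Eqn n → Eqn m
  | .one i => .one (σ i)
  | .add i j k => .add (σ i) (σ j) (σ k)
  | .mul i j k => .mul (σ i) (σ j) (σ k)

theorem Eqn.holds_map {n m : ℕ} {K : Type*} [CommSemiring K] (σ : Fin n → Fin m)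
    (y : Fin m → K) (e : Eqn n) : (e.map σ).Holds y ↔ e.Holds (y ∘ σ) := by
  cases e <;> rfl

/-- Every equation of `E_s` involves at most three unknowns, so a system of such equations in
unknowns indexed by `α` is a list of equations of `E_3` together with a labelling of their
unknowns. -/
abbrev EqnSystem (α : Type*) := List (Eqn 3 × (Fin 3 → α))

namespace EqnSystem

variable {α β : Type*}

def Holds (Ψ : EqnSystem α) (y : α → ℤ) : Prop := ∀ e ∈ Ψ, e.1.Holds (y ∘ e.2)

def rename (σ : α → β) (Ψ : EqnSystem α) : EqnSystem β := Ψ.map fun e => (e.1, σ ∘ e.2)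

@[simp]
theorem holds_rename {σ : α → β} {Ψ : EqnSystem α} {y : β → ℤ} :
    (Ψ.rename σ).Holds y ↔ Ψ.Holds (y ∘ σ) := by
  simp only [Holds, rename, List.forall_mem_map]
  rfl

@[simp]
theorem holds_append {Ψ Φ : EqnSystem α} {y : α → ℤ} :
    (Ψ ++ Φ).Holds y ↔ Ψ.Holds y ∧ Φ.Holds y := by
  simp only [Holds, List.mem_append, or_imp, forall_and]

def toEqns {s : ℕ} (Ψ : EqnSystem (Fin s)) : List (Eqn s) :=
  Ψ.map fun e => e.1.map e.2

theorem holds_toEqns {s : ℕ} (Ψ : EqnSystem (Fin s)) (y : Fin s → ℤ) :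
    (∀ e ∈ Ψ.toEqns, e.Holds y) ↔ Ψ.Holds y := by
  simp only [toEqns, Holds, List.forall_mem_map, Eqn.holds_map]

end EqnSystem

def IsEqnDefinable {ι : Type*} (R : (ι → ℤ) → Prop) : Prop :=
  ∃ (κ : Type) (_ : Finite κ) (Ψ : EqnSystem (ι ⊕ κ)),
    ∀ x, R x ↔ ∃ z, Ψ.Holds (Sum.elim x z)

namespace IsEqnDefinable

variable {ι : Type*} {R S : (ι → ℤ) → Prop}

theorem of_iff (h : IsEqnDefinable R) (hS : ∀ x, S x ↔ R x) : IsEqnDefinable S := by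
  obtain ⟨κ, _, Ψ, hΨ⟩ := h
  exact ⟨κ, inferInstance, Ψ, fun x => (hS x).trans (hΨ x)⟩

theorem of_holds (Ψ : EqnSystem ι) : IsEqnDefinable Ψ.Holds :=
  ⟨Empty, inferInstance, Ψ.rename .inl, fun x => by simp⟩

theorem and (hR : IsEqnDefinable R) (hS : IsEqnDefinable S) :
    IsEqnDefinable fun x => R x ∧ S x := by
  obtain ⟨κ, _, Ψ, hΨ⟩ := hR
  obtain ⟨μ, _, Φ, hΦ⟩ := hS
  refine ⟨κ ⊕ μ, inferInstance, Ψ.rename (Sum.map id .inl) ++ Φ.rename (Sum.map id .inr),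
    fun x => ?_⟩
  simp only [hΨ, hΦ, EqnSystem.holds_append, EqnSystem.holds_rename, Sum.elim_comp_map,
    Function.comp_id]
  constructor
  · rintro ⟨⟨z, hz⟩, ⟨w, hw⟩⟩
    exact ⟨Sum.elim z w, by simpa using hz, by simpa using hw⟩
  · rintro ⟨z, hz, hw⟩
    exact ⟨⟨_, hz⟩, ⟨_, hw⟩⟩

theorem exists_tuple {κ' : Type} [Finite κ'] {R : (ι ⊕ κ' → ℤ) → Prop}
    (hR : IsEqnDefinable R) : IsEqnDefinable fun x => ∃ w : κ' → ℤ, R (Sum.elim x w) := by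
  obtain ⟨κ, _, Ψ, hΨ⟩ := hR
  refine ⟨κ' ⊕ κ, inferInstance, Ψ.rename (Equiv.sumAssoc ι κ' κ), fun x => ?_⟩
  simp only [hΨ, EqnSystem.holds_rename]
  constructor
  · rintro ⟨w, z, hz⟩
    refine ⟨Sum.elim w z, ?_⟩
    convert hz using 2
    ext ((i | i) | i) <;> rfl
  · rintro ⟨z, hz⟩
    refine ⟨z ∘ .inl, z ∘ .inr, ?_⟩
    convert hz using 2
    ext ((i | i) | i) <;> rfl

theorem forall_finite {J : Type*} [Finite J] {R : J → (ι → ℤ) → Prop}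
    (h : ∀ j, IsEqnDefinable (R j)) : IsEqnDefinable fun x => ∀ j, R j x := by
  classical
  cases nonempty_fintype J
  suffices ∀ s : Finset J, IsEqnDefinable fun x => ∀ j ∈ s, R j x from
    (this Finset.univ).of_iff (by simp)
  intro s
  induction s using Finset.induction_on with
  | empty => exact (of_holds []).of_iff (by simp [EqnSystem.Holds])
  | insert j s _ ih => exact ((h j).and ih).of_iff (by simp)

theorem exists_eqns {p : ℕ} {R : (Fin p → ℤ) → Prop} (h : IsEqnDefinable R) :
    ∃ (n : ℕ) (Ψ : List (Eqn (p + n))), ∀ x, R x ↔ ∃ y : Fin (p + n) → ℤ,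
      (∀ i, y (Fin.castAdd n i) = x i) ∧ ∀ e ∈ Ψ, e.Holds y := by
  obtain ⟨κ, _, Ψ, hΨ⟩ := h
  obtain ⟨n, ⟨eκ⟩⟩ := Finite.exists_equiv_fin κ
  let σ : Fin p ⊕ κ ≃ Fin (p + n) := (Equiv.sumCongr (.refl _) eκ).trans finSumFinEquiv
  refine ⟨n, (Ψ.rename σ).toEqns, fun x => ?_⟩
  simp only [hΨ, EqnSystem.holds_toEqns, EqnSystem.holds_rename]
  constructor
  · rintro ⟨z, hz⟩
    refine ⟨Sum.elim x z ∘ σ.symm, fun i => ?_, by simpa [Function.comp_assoc] using hz⟩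
    simp [σ]
  · rintro ⟨y, hx, hy⟩
    refine ⟨y ∘ σ ∘ .inr, ?_⟩
    convert hy using 2
    ext (i | k)
    · simp [σ, hx]
    · rfl

end IsEqnDefinable

section

variable {ι : Type*}

theorem isEqnDefinable_one (i : ι) : IsEqnDefinable fun x => x i = 1 :=
  (IsEqnDefinable.of_holds [(.one 0, ![i, i, i])]).of_iff fun x => by
    simp [EqnSystem.Holds, Eqn.Holds]

theorem isEqnDefinable_add (i j k : ι) : IsEqnDefinable fun x => x i + x j = x k :=
  (IsEqnDefinable.of_holds [(.add 0 1 2, ![i, j, k])]).of_iff fun x => by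
    simp [EqnSystem.Holds, Eqn.Holds]

theorem isEqnDefinable_mul (i j k : ι) : IsEqnDefinable fun x => x i * x j = x k :=
  (IsEqnDefinable.of_holds [(.mul 0 1 2, ![i, j, k])]).of_iff fun x => by
    simp [EqnSystem.Holds, Eqn.Holds]

theorem isEqnDefinable_eq_intCast (v : ι) (a : ℤ) : IsEqnDefinable fun x => x v = a := by
  induction a generalizing ι with
  | zero => exact (isEqnDefinable_add v v v).of_iff fun x => by simp
  | succ a ih =>
    refine (((ih (.inr 0)).and ((isEqnDefinable_one (.inr 1)).and
      (isEqnDefinable_add (.inr 0) (.inr 1) (.inl v)))).exists_tuple (κ' := Fin 2)).of_iff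
      fun x => ?_
    simp only [Fin.exists_fin_succ_pi, Fin.cons_zero, Fin.cons_one, Sum.elim_inl, Sum.elim_inr,
      exists_and_left, exists_const, exists_eq_left]
    constructor <;> intro h <;> linarith
  | pred a ih =>
    refine (((ih (.inr 0)).and ((isEqnDefinable_one (.inr 1)).and
      (isEqnDefinable_add (.inl v) (.inr 1) (.inr 0)))).exists_tuple (κ' := Fin 2)).of_iff
      fun x => ?_
    simp only [Fin.exists_fin_succ_pi, Fin.cons_zero, Fin.cons_one, Sum.elim_inl, Sum.elim_inr,
      exists_and_left, exists_const, exists_eq_left]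
    constructor <;> intro h <;> linarith

theorem isEqnDefinable_eq_aeval {σ : Type*} (P : MvPolynomial σ ℤ) (v : ι) (u : σ → ι) :
    IsEqnDefinable fun x => x v = aeval (x ∘ u) P := by
  induction P using MvPolynomial.induction_on generalizing ι with
  | C a => simpa using isEqnDefinable_eq_intCast v a
  | add p q hp hq =>
    refine (((hp (.inr 0) (.inl ∘ u)).and ((hq (.inr 1) (.inl ∘ u)).and
      (isEqnDefinable_add (.inr 0) (.inr 1) (.inl v)))).exists_tuple (κ' := Fin 2)).of_iff
      fun x => ?_
    simp [Fin.exists_fin_succ_pi, ← Function.comp_assoc, eq_comm]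
  | mul_X p i hp =>
    refine (((hp (.inr 0) (.inl ∘ u)).and
      (isEqnDefinable_mul (.inr 0) (.inl (u i)) (.inl v))).exists_tuple (κ' := Fin 1)).of_iff
      fun x => ?_
    simp [Fin.exists_fin_succ_pi, ← Function.comp_assoc, eq_comm]

theorem isEqnDefinable_aeval_eq_zero {σ : Type*} (P : MvPolynomial σ ℤ) (u : σ → ι) :
    IsEqnDefinable fun x => aeval (x ∘ u) P = 0 :=
  (((isEqnDefinable_eq_intCast (.inr 0) 0).and
    (isEqnDefinable_eq_aeval P (.inr 0) (.inl ∘ u))).exists_tuple (κ' := Fin 1)).of_iff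
    fun x => by simp [Fin.exists_fin_succ_pi, ← Function.comp_assoc, eq_comm]

theorem isEqnDefinable_eq (i j : ι) : IsEqnDefinable fun x => x i = x j :=
  (isEqnDefinable_eq_aeval (X ()) i fun _ => j).of_iff fun x => by simp

theorem Int.nonneg_iff_exists_eq_sum_four_sq (a : ℤ) :
    0 ≤ a ↔ ∃ t : Fin 4 → ℤ, a = ∑ j, t j ^ 2 := by
  constructor
  · intro ha
    obtain ⟨b, c, d, e, h⟩ := Nat.sum_four_squares a.toNat
    refine ⟨![b, c, d, e], ?_⟩
    have h' := congrArg ((↑) : ℕ → ℤ) h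
    push_cast [Int.toNat_of_nonneg ha] at h'
    simp [Fin.sum_univ_four, h']
  · rintro ⟨t, rfl⟩
    positivity

theorem isEqnDefinable_nonneg (v : ι) : IsEqnDefinable fun x => 0 ≤ x v :=
  (isEqnDefinable_eq_aeval (∑ j : Fin 4, X j ^ 2) (.inl v) .inr).exists_tuple.of_iff fun x => by
    simp [Int.nonneg_iff_exists_eq_sum_four_sq]

end

theorem graph_iff_exists_nonneg_aeval_eq_zero {f : ℕ → ℕ} {σ : Type*}
    {W : MvPolynomial σ ℤ} {a b : σ} (hW : ∀ x1 x2 : ℕ, x1 = f x2 ↔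
      ∃ x : σ → ℕ, x a = x1 ∧ x b = x2 ∧ aeval (fun i => (x i : ℤ)) W = 0)
    (x1 x2 : ℤ) :
    (0 ≤ x2 ∧ x1 = f x2.toNat) ↔
      ∃ w : σ → ℤ, ((∀ k, 0 ≤ w k) ∧ aeval w W = 0) ∧ w a = x1 ∧ w b = x2 := by
  constructor
  · rintro ⟨hx2, rfl⟩
    obtain ⟨x, hxa, hxb, hx⟩ := (hW _ x2.toNat).1 rfl
    exact ⟨fun k => x k, ⟨fun k => Int.natCast_nonneg _, hx⟩, by simp [hxa],
      by simp [hxb, hx2]⟩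
  · rintro ⟨w, ⟨hw, hw0⟩, rfl, rfl⟩
    have hcast : (fun k => ((w k).toNat : ℤ)) = w := funext fun k => Int.toNat_of_nonneg (hw k)
    have hf := (hW _ _).2 ⟨fun k => (w k).toNat, rfl, rfl, by rwa [hcast]⟩
    refine ⟨hw _, ?_⟩
    rw [← Int.toNat_of_nonneg (hw _)]
    exact congrArg _ hf

theorem isEqnDefinable_graph {f : ℕ → ℕ} {σ : Type} [Finite σ] {W : MvPolynomial σ ℤ}
    {a b : σ} (hW : ∀ x1 x2 : ℕ, x1 = f x2 ↔
      ∃ x : σ → ℕ, x a = x1 ∧ x b = x2 ∧ aeval (fun i => (x i : ℤ)) W = 0)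
    {ι : Type*} (i j : ι) :
    IsEqnDefinable fun x : ι → ℤ => 0 ≤ x j ∧ x i = f (x j).toNat :=
  ((((IsEqnDefinable.forall_finite fun k => isEqnDefinable_nonneg (.inr k)).and
    (isEqnDefinable_aeval_eq_zero W .inr)).and
    ((isEqnDefinable_eq (.inr a) (.inl i)).and
      (isEqnDefinable_eq (.inr b) (.inl j)))).exists_tuple).of_iff fun x => by
    simpa using graph_iff_exists_nonneg_aeval_eq_zero hW (x i) (x j)

theorem stmt_14 (f : ℕ → ℕ) (r : ℕ) (hr : 2 ≤ r) (W : MvPolynomial (Fin r) ℤ)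
    (hW : ∀ x1 x2 : ℕ, x1 = f x2 ↔
      ∃ x : Fin r → ℕ, x ⟨0, by omega⟩ = x1 ∧ x ⟨1, by omega⟩ = x2 ∧
        MvPolynomial.aeval (fun i => (x i : ℤ)) W = 0) :
    ∃ (s : ℕ) (hs : 3 ≤ s) (Ψ : List (Eqn s)),
      ∀ x1 x2 : ℤ, (0 ≤ x2 ∧ x1 = (f x2.toNat : ℤ)) ↔
        ∃ y : Fin s → ℤ, y ⟨0, by omega⟩ = x1 ∧ y ⟨1, by omega⟩ = x2 ∧
          ∀ e ∈ Ψ, e.Holds y := by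
  -- The third visible unknown is a dummy; it only makes sure that `3 ≤ s`.
  obtain ⟨n, Ψ, hΨ⟩ := (isEqnDefinable_graph hW (0 : Fin 3) 1).exists_eqns
  refine ⟨3 + n, by omega, Ψ, fun x1 x2 => ?_⟩
  constructor
  · intro h
    obtain ⟨y, hy, hΨy⟩ := (hΨ ![x1, x2, 0]).1 h
    exact ⟨y, hy 0, hy 1, hΨy⟩
  · rintro ⟨y, rfl, rfl, hΨy⟩
    exact (hΨ (y ∘ Fin.castAdd n)).2 ⟨y, fun _ => rfl, hΨy⟩
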